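/- Let g : ℝ → ℝ and g̃ : ℝ → ℝ be defined for m distinct points y₁,…,y_m and directions z₁,…,z_m by g(a) = F((1/m)∑_i δ_{y_i + a z_i}) and g̃(a) = (1/m)∑_i (y_i + a z_i)² − g(a), where F : P₂(ℝ) → ℝ is C² in the Wasserstein sense. If g''(0) ≥ 0 and g̃''(0) ≥ 0, then (C)·(1/m)∑_i z_i² ≥ (1/m²)∑_{i,j} ∂²_{μμ}F(γ_m, y_i, y_j) z_i z_j + (1/m)∑_i ∂_x∂_μF(γ_m, y_i) z_i² ≥ 0, where γ_m = (1/m)∑_i δ_{y_i} and the upper constant is C = 2 (coming from (d²/da²)(1/m)∑(y_i+az_i)² = (2/m)∑z_i²). -/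

import Mathlib

/-!
The path `a ↦ (1/m)∑ (y_i + a z_i)²` is a quadratic polynomial with second derivative
`(2/m)∑ z_i²`, so `g̃''(0) = (2/m)∑ z_i² - g''(0)`; the two claimed bounds are `g̃''(0) ≥ 0` and
`g''(0) ≥ 0` rewritten.
-/

open MeasureTheory
open scoped BigOperators

/-- Empirical measure `(1/m)∑_{i=1}^m δ_{f(i)}`. -/
noncomputable def empMeasure {α : Type*} [MeasurableSpace α] {m : ℕ} (f : Fin m → α) :
    Measure α :=
  (m : ENNReal)⁻¹ • ∑ i, Measure.dirac (f i)

theorem deriv_deriv_sub_eq {f g f' g' : ℝ → ℝ} {x p q : ℝ}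
    (hf : ∀ a, HasDerivAt f (f' a) a) (hg : ∀ a, HasDerivAt g (g' a) a)
    (hf' : HasDerivAt f' p x) (hg' : HasDerivAt g' q x) :
    deriv (deriv fun a => f a - g a) x = p - q := by
  have hderiv : deriv (fun a => f a - g a) = fun a => f' a - g' a :=
    funext fun a => ((hf a).sub (hg a)).deriv
  rw [hderiv]
  exact (hf'.sub hg').deriv

section AffinePath

variable {ι : Type*} [Fintype ι] (c : ℝ) (y z : ι → ℝ)

theorem hasDerivAt_const_mul_sum_sq_affine (a : ℝ) :
    HasDerivAt (fun a => c * ∑ i, (y i + a * z i) ^ 2)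
      (c * ∑ i, 2 * (y i + a * z i) * z i) a := by
  refine (HasDerivAt.fun_sum fun i _ => ?_).const_mul c
  simpa [mul_comm, mul_left_comm] using
    (((hasDerivAt_mul_const (z i)).const_add (y i)).fun_pow 2)

theorem hasDerivAt_const_mul_sum_two_mul_affine_mul (a : ℝ) :
    HasDerivAt (fun a => c * ∑ i, 2 * (y i + a * z i) * z i)
      (2 * (c * ∑ i, z i ^ 2)) a := by
  have hsum : HasDerivAt (fun a => ∑ i, 2 * (y i + a * z i) * z i) (∑ i, 2 * z i ^ 2) a :=
    HasDerivAt.fun_sum fun i _ => by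
      simpa [sq, mul_assoc] using
        ((((hasDerivAt_mul_const (z i)).const_add (y i)).const_mul 2).mul_const (z i))
  refine (hsum.const_mul c).congr_deriv ?_
  rw [← Finset.mul_sum]
  ring

end AffinePath

theorem stmt15_general (m : ℕ)
    (D2 : Measure ℝ → ℝ → ℝ → ℝ) (D11 : Measure ℝ → ℝ → ℝ)
    (y z : Fin m → ℝ)
    (g g' : ℝ → ℝ)
    (hg' : ∀ a, HasDerivAt g (g' a) a)
    (hg'' : HasDerivAt g'
      ((1 / (m : ℝ) ^ 2) * ∑ i, ∑ j, D2 (empMeasure y) (y i) (y j) * z i * z j +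
        (1 / (m : ℝ)) * ∑ i, D11 (empMeasure y) (y i) * z i ^ 2) 0)
    (hgpos : 0 ≤ deriv g' 0)
    (hgtildepos : 0 ≤ deriv (deriv (fun a => (1 / (m : ℝ)) * ∑ i, (y i + a * z i) ^ 2 - g a)) 0) :
    ((1 / (m : ℝ) ^ 2) * ∑ i, ∑ j, D2 (empMeasure y) (y i) (y j) * z i * z j +
        (1 / (m : ℝ)) * ∑ i, D11 (empMeasure y) (y i) * z i ^ 2)
      ≤ 2 * ((1 / (m : ℝ)) * ∑ i, z i ^ 2) ∧
    0 ≤ (1 / (m : ℝ) ^ 2) * ∑ i, ∑ j, D2 (empMeasure y) (y i) (y j) * z i * z j +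
        (1 / (m : ℝ)) * ∑ i, D11 (empMeasure y) (y i) * z i ^ 2 := by
  rw [deriv_deriv_sub_eq (hasDerivAt_const_mul_sum_sq_affine _ y z) hg'
    (hasDerivAt_const_mul_sum_two_mul_affine_mul _ y z 0) hg''] at hgtildepos
  rw [hg''.deriv] at hgpos
  exact ⟨sub_nonneg.mp hgtildepos, hgpos⟩

/-- let `g(a) = F((1/m)∑δ_{y_i+az_i})` and
`g̃(a) = (1/m)∑(y_i+az_i)² − g(a)`, where `F` is `C²` in the Wasserstein sense, so that
(per the context) `g''(0)` equals the second-order Taylor expression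
`Q = (1/m²)∑_{i,j}∂²_{μμ}F(γ_m,y_i,y_j)z_iz_j + (1/m)∑_i ∂_x∂_μF(γ_m,y_i)z_i²`.
If `g''(0) ≥ 0` and `g̃''(0) ≥ 0`, then `2·(1/m)∑z_i² ≥ Q ≥ 0`. -/
theorem stmt15 (m : ℕ) (hm : 0 < m) (F : Measure ℝ → ℝ)
    (D2 : Measure ℝ → ℝ → ℝ → ℝ) (D11 : Measure ℝ → ℝ → ℝ)
    (y z : Fin m → ℝ) (hy : Function.Injective y)
    (g g' : ℝ → ℝ)
    (hg : ∀ a, g a = F (empMeasure fun i => y i + a * z i))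
    (hg' : ∀ a, HasDerivAt g (g' a) a)
    (hg'' : HasDerivAt g'
      ((1 / (m : ℝ) ^ 2) * ∑ i, ∑ j, D2 (empMeasure y) (y i) (y j) * z i * z j +
        (1 / (m : ℝ)) * ∑ i, D11 (empMeasure y) (y i) * z i ^ 2) 0)
    (hgpos : 0 ≤ deriv g' 0)
    (hgtildepos : 0 ≤ deriv (deriv (fun a => (1 / (m : ℝ)) * ∑ i, (y i + a * z i) ^ 2 - g a)) 0) :
    ((1 / (m : ℝ) ^ 2) * ∑ i, ∑ j, D2 (empMeasure y) (y i) (y j) * z i * z j +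
        (1 / (m : ℝ)) * ∑ i, D11 (empMeasure y) (y i) * z i ^ 2)
      ≤ 2 * ((1 / (m : ℝ)) * ∑ i, z i ^ 2) ∧
    0 ≤ (1 / (m : ℝ) ^ 2) * ∑ i, ∑ j, D2 (empMeasure y) (y i) (y j) * z i * z j +
        (1 / (m : ℝ)) * ∑ i, D11 (empMeasure y) (y i) * z i ^ 2 :=
  stmt15_general m D2 D11 y z g g' hg' hg'' hgpos hgtildepos
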